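/- arXiv:math/0610161 — 2 statements merged into one kernel-verified Lean document; each statement's English description precedes it below -/
import Mathlib

section
/- Let J be closed and suppose the poset 𝒫 determined by J contains no 4-chain (i,j,k,l). Then every superclass of U_J is a single conjugacy class, and every supercharacter χ^η (η ∈ J*) is an irreducible complex character of U_J. -/
open Matrix BigOperators

namespace SCT

/-- Pairs of indices. -/
abbrev Pr (n : ℕ) := Fin n × Fin n

/-- A closed subset `J ⊆ {(i,j) : i < j}`:  `(i,j) ∈ J` and `(j,k) ∈ J` imply `(i,k) ∈ J`. -/
def Closed {n : ℕ} (J : Finset (Pr n)) : Prop :=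
  (∀ p ∈ J, p.1 < p.2) ∧
  ∀ i j k : Fin n, (i, j) ∈ J → (j, k) ∈ J → (i, k) ∈ J

variable {F : Type*} [Field F] [Fintype F] [DecidableEq F] {n : ℕ}

/-- `X_φ = Σ_{(i,j) ∈ J} φ_{ij} X_{ij}`. -/
def Xmat (J : Finset (Pr n)) (φ : Pr n → F) : Matrix (Fin n) (Fin n) F :=
  Matrix.of fun i j => if (i, j) ∈ J then φ (i, j) else 0

/-- `x_φ = 1 + X_φ`. -/
def xmat (J : Finset (Pr n)) (φ : Pr n → F) : Matrix (Fin n) (Fin n) F :=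
  1 + Xmat J φ

/-- `x_{ij}(t) = 1 + t X_{ij}`. -/
def xelt (i j : Fin n) (t : F) : Matrix (Fin n) (Fin n) F :=
  1 + Matrix.single i j t

/-- The pattern group `U_J`, as a set of matrices: ones on the diagonal, entries off the
diagonal vanish outside `J`. -/
def UJ (J : Finset (Pr n)) : Set (Matrix (Fin n) (Fin n) F) :=
  {M | (∀ i, M i i = 1) ∧ ∀ i j : Fin n, i ≠ j → (i, j) ∉ J → M i j = 0}

/-- `𝔫_J`: matrices supported on `J`. -/
def nJset (J : Finset (Pr n)) : Set (Matrix (Fin n) (Fin n) F) :=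
  {M | ∀ i j : Fin n, (i, j) ∉ J → M i j = 0}

/-- The functional `λ_η` evaluated at a matrix of `𝔫_J`. -/
def lam (J : Finset (Pr n)) (η : Pr n → F) (X : Matrix (Fin n) (Fin n) F) : F :=
  ∑ p ∈ J, η p * X p.1 p.2

/-- A functional with coefficients indexed by `J` evaluated at a matrix. -/
def lamSub (J : Finset (Pr n)) (η : {p // p ∈ J} → F) (X : Matrix (Fin n) (Fin n) F) : F :=
  ∑ p ∈ J.attach, η p * X p.1.1 p.1.2

/-- The two-sided orbit `O_φ = U_J X_φ U_J ⊆ 𝔫_J`. -/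
def biOrbit (J : Finset (Pr n)) (φ : Pr n → F) : Set (Matrix (Fin n) (Fin n) F) :=
  {Y | ∃ u v : Matrix (Fin n) (Fin n) F, u ∈ UJ J ∧ v ∈ UJ J ∧ Y = u * Xmat J φ * v}

/-- `(M_φ^R)_{(i,l),(j,k)} = φ_{ij}` if `k = l` and `(i,j,l) ∈ 𝒫`, else `0`. -/
def MphiR (J : Finset (Pr n)) (φ : Pr n → F) : Matrix {p // p ∈ J} {p // p ∈ J} F :=
  Matrix.of fun p q =>
    if q.1.2 = p.1.2 ∧ (p.1.1, q.1.1) ∈ J ∧ (q.1.1, p.1.2) ∈ J then φ (p.1.1, q.1.1) else 0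

/-- `(M_φ^L)_{(i,l),(j,k)} = φ_{kl}` if `i = j` and `(i,k,l) ∈ 𝒫`, else `0`. -/
def MphiL (J : Finset (Pr n)) (φ : Pr n → F) : Matrix {p // p ∈ J} {p // p ∈ J} F :=
  Matrix.of fun p q =>
    if q.1.1 = p.1.1 ∧ (p.1.1, q.1.2) ∈ J ∧ (q.1.2, p.1.2) ∈ J then φ (q.1.2, p.1.2) else 0

/-- `(M_L^η)_{(j,k),(i,l)} = η_{ik}` if `l = j` and `(i,j,k) ∈ 𝒫`, else `0`. -/
def MetaL (J : Finset (Pr n)) (η : Pr n → F) : Matrix {p // p ∈ J} {p // p ∈ J} F :=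
  Matrix.of fun p q =>
    if q.1.2 = p.1.1 ∧ (q.1.1, p.1.1) ∈ J ∧ (p.1.1, p.1.2) ∈ J then η (q.1.1, p.1.2) else 0

/-- `(M_R^η)_{(j,k),(i,l)} = η_{jl}` if `k = i` and `(j,k,l) ∈ 𝒫`, else `0`. -/
def MetaR (J : Finset (Pr n)) (η : Pr n → F) : Matrix {p // p ∈ J} {p // p ∈ J} F :=
  Matrix.of fun p q =>
    if q.1.1 = p.1.2 ∧ (p.1.1, p.1.2) ∈ J ∧ (p.1.2, q.1.2) ∈ J then η (p.1.1, q.1.2) else 0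

/-- `corank(η) = rank(M_L^η)`. -/
noncomputable def corank (J : Finset (Pr n)) (η : Pr n → F) : ℕ := (MetaL J η).rank

/-- `(M_φ^η)_{(i,j),(k,l)} = φ_{jk} η_{il}` if `(i,j,k,l) ∈ 𝒫`, else `0`. -/
def Mmesh (J : Finset (Pr n)) (φ η : Pr n → F) : Matrix {p // p ∈ J} {p // p ∈ J} F :=
  Matrix.of fun p q =>
    if (p.1.2, q.1.1) ∈ J then φ (p.1.2, q.1.1) * η (p.1.1, q.1.2) else 0

/-- `(a_φ^η)_{(i,j)} = Σ_{(i,j,k) ∈ 𝒫} φ_{jk} η_{ik}`. -/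
def aVec (J : Finset (Pr n)) (φ η : Pr n → F) : {p // p ∈ J} → F :=
  fun p => ∑ k : Fin n, if (p.1.2, k) ∈ J then φ (p.1.2, k) * η (p.1.1, k) else 0

/-- `(b_φ^η)_{(j,k)} = Σ_{(i,j,k) ∈ 𝒫} φ_{ij} η_{ik}`. -/
def bVec (J : Finset (Pr n)) (φ η : Pr n → F) : {p // p ∈ J} → F :=
  fun p => ∑ i : Fin n, if (i, p.1.1) ∈ J then φ (i, p.1.1) * η (i, p.1.2) else 0

/-- `φ` meshes with `η`. -/
def Meshes (J : Finset (Pr n)) (φ η : Pr n → F) : Prop :=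
  (∃ b : {p // p ∈ J} → F, (Mmesh J φ η).mulVec b = -aVec J φ η) ∧
  ∀ v : {p // p ∈ J} → F, (Mmesh J φ η).mulVec v = 0 → bVec J φ η ⬝ᵥ v = 0

/-- The supercharacter `χ^η` evaluated at `x_φ`. -/
noncomputable def superchar (J : Finset (Pr n)) (θ : AddChar F ℂ) (η φ : Pr n → F) : ℂ :=
  ((Fintype.card F : ℂ) ^ corank J η / (Nat.card (biOrbit J φ) : ℂ)) *
    ∑ᶠ Y ∈ biOrbit J φ, (starRingEnd ℂ) (θ (lam J η Y))

/-- `χ` restricted to `U` is the character of an irreducible complex representation of `U`. -/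
def IsIrredCharOn (U : Set (Matrix (Fin n) (Fin n) F))
    (χ : Matrix (Fin n) (Fin n) F → ℂ) : Prop :=
  ∃ d : ℕ, 0 < d ∧ ∃ ρ : Matrix (Fin n) (Fin n) F → Matrix (Fin d) (Fin d) ℂ,
    ρ 1 = 1 ∧
    (∀ A ∈ U, ∀ B ∈ U, ρ (A * B) = ρ A * ρ B) ∧
    (∀ W : Submodule ℂ (Fin d → ℂ), (∀ A ∈ U, ∀ w ∈ W, (ρ A).mulVec w ∈ W) → W = ⊥ ∨ W = ⊤) ∧
    ∀ A ∈ U, (ρ A).trace = χ A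

/-- The full set of positive roots. -/
def Jfull (n : ℕ) : Finset (Pr n) := Finset.univ.filter fun p : Pr n => p.1 < p.2

/-!  The total order and partial sum on positive roots. -/

/-- `α < β` in the total order: `(r,s) < (i,j)` iff `r > i`, or `r = i` and `s > j`. -/
def rlt {n : ℕ} (a b : Pr n) : Prop := b.1 < a.1 ∨ (a.1 = b.1 ∧ b.2 < a.2)

/-- `α + β` is defined in `R⁺`. -/
def rdef {n : ℕ} (a b : Pr n) : Prop := a.2 = b.1 ∨ b.2 = a.1

/-- The sum `α + β` (when defined). -/
def rsum {n : ℕ} (a b : Pr n) : Pr n := if a.2 = b.1 then (a.1, b.2) else (b.1, a.2)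

/-! Algebra groups. -/

/-- The algebra group `H = 1 + 𝔫`. -/
def algH (nn : Submodule F (Matrix (Fin n) (Fin n) F)) : Set (Matrix (Fin n) (Fin n) F) :=
  {M | ∃ X ∈ nn, M = 1 + X}

/-- The two sided orbit `H X H ⊆ 𝔫` of `X`. -/
def algBiOrbit (nn : Submodule F (Matrix (Fin n) (Fin n) F))
    (X : Matrix (Fin n) (Fin n) F) : Set nn :=
  {Y | ∃ u ∈ algH nn, ∃ v ∈ algH nn, (Y : Matrix (Fin n) (Fin n) F) = u * X * v}

/-- The right orbit `{λ · u : u ∈ H} ⊆ 𝔫*` of a functional `λ`, described via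
`λ' = λ · u⁻¹ ↔ (∀ Y, λ' Y = λ (Y u))`. -/
def algRightOrbit (nn : Submodule F (Matrix (Fin n) (Fin n) F))
    (l : Module.Dual F nn) : Set (Module.Dual F nn) :=
  {l' | ∃ u ∈ algH nn, ∀ (Y : nn) (h : (Y : Matrix (Fin n) (Fin n) F) * u ∈ nn),
      l' Y = l ⟨(Y : Matrix (Fin n) (Fin n) F) * u, h⟩}

/-- The supercharacter `χ^λ` of an algebra group, evaluated at `1 + X`. -/
noncomputable def algSuperchar (nn : Submodule F (Matrix (Fin n) (Fin n) F))
    (θ : AddChar F ℂ) (l : Module.Dual F nn) (X : Matrix (Fin n) (Fin n) F) : ℂ :=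
  ((Nat.card (algRightOrbit nn l) : ℂ) / (Nat.card (algBiOrbit nn X) : ℂ)) *
    ∑ᶠ Y ∈ algBiOrbit nn X, (starRingEnd ℂ) (θ (l Y))

/-! Algebra groups with a fixed basis `X_1, …, X_d` of `𝔫`. -/

/-- `X_ρ = Σ_i ρ_i X_i`. -/
def bigX {d : ℕ} (Xb : Fin d → Matrix (Fin n) (Fin n) F) (ρ : Fin d → F) :
    Matrix (Fin n) (Fin n) F :=
  ∑ i : Fin d, ρ i • Xb i

/-- The two-sided orbit of `X_φ`, in coordinates. -/
def algCoeffBiOrbit {d : ℕ} (Xb : Fin d → Matrix (Fin n) (Fin n) F) (φ : Fin d → F) :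
    Set (Fin d → F) :=
  {ρ | ∃ ζ₁ ζ₂ : Fin d → F,
      (1 + bigX Xb ζ₁) * bigX Xb φ * (1 + bigX Xb ζ₂) = bigX Xb ρ}

/-- The right orbit of `λ_η`, in coordinates (`λ_η(X_ν) = η ⬝ᵥ ν`). -/
def algCoeffRightOrbit {d : ℕ} (Xb : Fin d → Matrix (Fin n) (Fin n) F) (η : Fin d → F) :
    Set (Fin d → F) :=
  {η' | ∃ ζ : Fin d → F, ∀ ρ ν : Fin d → F,
      bigX Xb ρ * (1 + bigX Xb ζ) = bigX Xb ν → η' ⬝ᵥ ρ = η ⬝ᵥ ν}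

/-- The supercharacter `χ^η` of an algebra group with fixed basis, evaluated at `x_φ`. -/
noncomputable def algCoeffSuperchar {d : ℕ} (Xb : Fin d → Matrix (Fin n) (Fin n) F)
    (θ : AddChar F ℂ) (η φ : Fin d → F) : ℂ :=
  ((Nat.card (algCoeffRightOrbit Xb η) : ℂ) / (Nat.card (algCoeffBiOrbit Xb φ) : ℂ)) *
    ∑ᶠ ρ ∈ algCoeffBiOrbit Xb φ, (starRingEnd ℂ) (θ (η ⬝ᵥ ρ))

/-- `(C_i)_{jk} = c_{ij}^k`. -/
def Cleft {d : ℕ} (c : Fin d → Fin d → Fin d → F) (i : Fin d) : Matrix (Fin d) (Fin d) F :=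
  Matrix.of fun j k => c i j k

/-- `(C^j)_{ik} = c_{ij}^k`. -/
def Cright {d : ℕ} (c : Fin d → Fin d → Fin d → F) (j : Fin d) : Matrix (Fin d) (Fin d) F :=
  Matrix.of fun i k => c i j k

/-- `(M_φ^η)_{ij} = φ C_i C^j η`. -/
def algMmesh {d : ℕ} (c : Fin d → Fin d → Fin d → F) (φ η : Fin d → F) :
    Matrix (Fin d) (Fin d) F :=
  Matrix.of fun i j => φ ⬝ᵥ (Cleft c i * Cright c j).mulVec η

/-- `(a_φ^η)_i = φ C_i η`. -/
def algAVec {d : ℕ} (c : Fin d → Fin d → Fin d → F) (φ η : Fin d → F) : Fin d → F :=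
  fun i => φ ⬝ᵥ (Cleft c i).mulVec η

/-- `(b_φ^η)_j = φ C^j η`. -/
def algBVec {d : ℕ} (c : Fin d → Fin d → Fin d → F) (φ η : Fin d → F) : Fin d → F :=
  fun j => φ ⬝ᵥ (Cright c j).mulVec η

/-- `φ` meshes with `η` (algebra-group version). -/
def algMeshes {d : ℕ} (c : Fin d → Fin d → Fin d → F) (φ η : Fin d → F) : Prop :=
  (∃ b : Fin d → F, (algMmesh c φ η).mulVec b = -algAVec c φ η) ∧
  ∀ v : Fin d → F, (algMmesh c φ η).mulVec v = 0 → algBVec c φ η ⬝ᵥ v = 0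

end SCT

/-! Without 4-chains in `𝒫`, every product of three elements of `𝔫_J` vanishes, so for
`u = 1 + A`, `v = 1 + B` one has `u X v = X + A X + X B`: the superclass of `x_φ` is
`x_φ + 𝔫_J X_φ + X_φ 𝔫_J`. Keeping the rows of `A` that start at minimal elements and the other
rows of `-B` gives `C` with `C X = A X` and `X C = -X B`, so conjugation by `1 + C` reaches every
such element.

For the characters, `(1 + X)(1 + Y) = 1 + (X + Y + X Y)`, where the coordinates of `X Y` are
killed by `M = M_L^η` on both sides and `λ_η(X Y) = c_Y ⬝ M c_X`. Hence `1 + X` acting on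
functions on the column space `V` of `M` by `f ↦ (u ↦ ψ(λ_η(X) + c_X ⬝ u) f(u + M c_X))`, with
`ψ = conj ∘ θ`, is a representation of degree `q ^ rank M`; a character sum shows that its trace
is `χ^η`. It is irreducible: the diagonal operators given by coordinates supported on arcs into
maximal elements separate the points of `V`, and the translations by `M c` are transitive. -/

open Matrix

theorem AddChar.sum_comp_linearMap_eq_zero {K W R : Type*} [Field K] [AddCommGroup W]
    [Module K W] [Fintype W] [CommRing R] [IsDomain R] {ψ : AddChar K R} (hψ : ψ ≠ 1)
    {f : W →ₗ[K] K} (hf : f ≠ 0) : ∑ w, ψ (f w) = 0 := by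
  refine AddChar.sum_eq_zero_of_ne_one (ψ := ψ.compAddMonoidHom f.toAddMonoidHom) ?_
  obtain ⟨t, ht⟩ := AddChar.ne_one_iff.1 hψ
  obtain ⟨w, hw⟩ := DFunLike.ne_iff.1 hf
  refine AddChar.ne_one_iff.2 ⟨(t / f w) • w, ?_⟩
  simpa [div_mul_cancel₀ _ hw] using ht

theorem AddChar.sum_comp_linearMap_submodule {K E R : Type*} [Field K] [AddCommGroup E]
    [Module K E] [CommRing R] [IsDomain R] {ψ : AddChar K R} (hψ : ψ ≠ 1) (f : E →ₗ[K] K)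
    (S : Submodule K E) [Fintype S] {P : Prop} [Decidable P] (hP : P ↔ ∀ w ∈ S, f w = 0) :
    ∑ w : S, ψ (f w) = if P then (Fintype.card S : R) else 0 := by
  split_ifs with h
  · simp [(hP.1 h) _ (Subtype.prop _)]
  · refine AddChar.sum_comp_linearMap_eq_zero hψ (f := f ∘ₗ S.subtype) fun h0 => h (hP.2 ?_)
    exact fun w hw => congrArg (· ⟨w, hw⟩) h0

theorem Submodule.eq_bot_or_eq_top_of_separating_diagonal {K ι : Type*} [Field K] [Fintype ι]
    [DecidableEq ι] (W : Submodule K (ι → K)) (D : Set (ι → K))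
    (hD : ∀ d ∈ D, ∀ w ∈ W, d * w ∈ W) (hsep : Pairwise fun i j => ∃ d ∈ D, d i ≠ d j)
    (htrans : ∀ i j, Pi.single i 1 ∈ W → Pi.single j 1 ∈ W) : W = ⊥ ∨ W = ⊤ := by
  refine or_iff_not_imp_left.2 fun hW => ?_
  obtain ⟨w, hwW, hw0⟩ := (Submodule.ne_bot_iff W).1 hW
  obtain ⟨i, hi⟩ := Function.ne_iff.1 hw0
  -- the product over `j` of these multipliers is a nonzero multiple of the indicator of `i`
  have hfactor : ∀ j, ∃ g : ι → K, (∀ w ∈ W, g * w ∈ W) ∧ (j ≠ i → g j = 0) ∧ g i ≠ 0 := by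
    intro j
    by_cases hji : j = i
    · exact ⟨1, fun w hw => by rwa [one_mul], fun h => (h hji).elim, one_ne_zero⟩
    obtain ⟨d, hdD, hd⟩ := hsep hji
    refine ⟨d - fun _ => d j, fun w hw => ?_, fun _ => sub_self _, sub_ne_zero.2 hd.symm⟩
    have : (d - fun _ => d j) * w = d * w - d j • w := by ext; simp [sub_mul]
    rw [this]
    exact W.sub_mem (hD d hdD w hw) (W.smul_mem _ hw)
  choose g hgW hgj hgi using hfactor
  have hPW : (∏ j, g j) * w ∈ W :=
    Finset.prod_induction g (fun f => ∀ w ∈ W, f * w ∈ W)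
      (fun f f' hf hf' w hw => by rw [mul_assoc]; exact hf _ (hf' w hw))
      (fun w hw => by rwa [one_mul]) (fun j _ => hgW j) w hwW
  have hP : (∏ j, g j) * w = ((∏ j, g j i) * w i) • Pi.single i 1 := by
    ext j
    by_cases hji : j = i
    · subst hji; simp [Finset.prod_apply]
    · simpa [Finset.prod_apply, hji] using
        Or.inl (Finset.prod_eq_zero (f := fun c => g c j) (Finset.mem_univ j) (hgj j hji))
  have hsingle : Pi.single i 1 ∈ W := by
    have hc : (∏ j, g j i) * w i ≠ 0 :=
      mul_ne_zero (Finset.prod_ne_zero_iff.2 fun j _ => hgi j) hi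
    have := W.smul_mem ((∏ j, g j i) * w i)⁻¹ (hP ▸ hPW)
    rwa [inv_smul_smul₀ hc] at this
  rw [eq_top_iff, ← (Pi.basisFun K ι).span_eq, Submodule.span_le]
  rintro _ ⟨j, rfl⟩
  simpa using htrans i j hsingle

namespace SCT

variable {F : Type*} [Field F] {n : ℕ}

theorem isIrredCharOn_of_fintype {V : Type*} [Fintype V] [DecidableEq V] [Nonempty V]
    {U : Set (Matrix (Fin n) (Fin n) F)} {χ : Matrix (Fin n) (Fin n) F → ℂ}
    (ρ : Matrix (Fin n) (Fin n) F → Matrix V V ℂ) (h1 : ρ 1 = 1)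
    (hmul : ∀ A ∈ U, ∀ B ∈ U, ρ (A * B) = ρ A * ρ B)
    (hirr : ∀ W : Submodule ℂ (V → ℂ), (∀ A ∈ U, ∀ w ∈ W, ρ A *ᵥ w ∈ W) → W = ⊥ ∨ W = ⊤)
    (htr : ∀ A ∈ U, (ρ A).trace = χ A) : IsIrredCharOn U χ := by
  set e := Fintype.equivFin V
  let pull : (Fin (Fintype.card V) → ℂ) ≃ₗ[ℂ] (V → ℂ) := LinearEquiv.funCongrLeft ℂ ℂ e
  refine ⟨Fintype.card V, Fintype.card_pos, fun A => (ρ A).submatrix e.symm e.symm,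
    by simp [h1], fun A hA B hB => by simp [hmul A hA B hB], fun W hW => ?_,
    fun A hA => by simp [Matrix.trace, ← htr A hA, e.symm.sum_comp (fun v => ρ A v v)]⟩
  have hW' : ∀ A ∈ U, ∀ w ∈ W.map pull.toLinearMap, ρ A *ᵥ w ∈ W.map pull.toLinearMap := by
    rintro A hA _ ⟨w, hw, rfl⟩
    refine ⟨_, hW A hA w hw, funext fun v => ?_⟩
    simp [pull, submatrix_mulVec_equiv, LinearMap.funLeft]
  rcases hirr _ hW' with h | h
  · exact Or.inl (by simpa using h)
  · exact Or.inr (by simpa using h)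

def nJ (J : Finset (Pr n)) : Submodule F (Matrix (Fin n) (Fin n) F) where
  carrier := nJset J
  add_mem' hX hY i j h := by simp [hX i j h, hY i j h]
  zero_mem' _ _ _ := rfl
  smul_mem' c X hX i j h := by simp [hX i j h]

def NoFourChain (J : Finset (Pr n)) : Prop :=
  ¬ ∃ i j k l : Fin n, (i, j) ∈ J ∧ (j, k) ∈ J ∧ (k, l) ∈ J

variable {J : Finset (Pr n)}

theorem entry_eq_zero_of_mem_nJ {X : Matrix (Fin n) (Fin n) F} (hX : X ∈ nJ J) {i j : Fin n}
    (h : (i, j) ∉ J) : X i j = 0 :=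
  hX i j h

theorem Closed.pair_self_notMem (hJ : Closed J) (i : Fin n) : (i, i) ∉ J :=
  fun h => lt_irrefl i (hJ.1 _ h)

theorem Closed.mul_mem_nJ (hJ : Closed J) {X Y : Matrix (Fin n) (Fin n) F} (hX : X ∈ nJ J)
    (hY : Y ∈ nJ J) : X * Y ∈ nJ J := by
  intro i k h
  rw [Matrix.mul_apply]
  refine Finset.sum_eq_zero fun j _ => ?_
  by_cases hij : (i, j) ∈ J
  · rw [entry_eq_zero_of_mem_nJ hY fun hjk => h (hJ.2 i j k hij hjk), mul_zero]
  · rw [entry_eq_zero_of_mem_nJ hX hij, zero_mul]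

theorem NoFourChain.mul_mul_eq_zero (h4 : NoFourChain J) {X Y Z : Matrix (Fin n) (Fin n) F}
    (hX : X ∈ nJ J) (hY : Y ∈ nJ J) (hZ : Z ∈ nJ J) : X * Y * Z = 0 := by
  ext i l
  rw [Matrix.mul_apply, Matrix.zero_apply]
  refine Finset.sum_eq_zero fun k _ => ?_
  by_cases hkl : (k, l) ∈ J
  · rw [Matrix.mul_apply, Finset.sum_mul]
    refine Finset.sum_eq_zero fun j _ => ?_
    by_cases hij : (i, j) ∈ J
    · rw [entry_eq_zero_of_mem_nJ hY fun hjk => h4 ⟨i, j, k, l, hij, hjk, hkl⟩, mul_zero,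
        zero_mul]
    · rw [entry_eq_zero_of_mem_nJ hX hij, zero_mul, zero_mul]
  · rw [entry_eq_zero_of_mem_nJ hZ hkl, mul_zero]

theorem Closed.one_add_mem_UJ (hJ : Closed J) {X : Matrix (Fin n) (Fin n) F} (hX : X ∈ nJ J) :
    1 + X ∈ UJ J :=
  ⟨fun i => by simp [entry_eq_zero_of_mem_nJ hX (hJ.pair_self_notMem i)],
    fun i j hij h => by simp [entry_eq_zero_of_mem_nJ hX h, hij]⟩

theorem sub_one_mem_nJ {A : Matrix (Fin n) (Fin n) F} (hA : A ∈ UJ J) : A - 1 ∈ nJ J := by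
  intro i j h
  by_cases hij : i = j
  · subst hij; simp [hA.1 i]
  · simp [hA.2 i j hij h, hij]

theorem Xmat_mem_nJ (φ : Pr n → F) : Xmat J φ ∈ nJ J := by
  intro i j h
  simp [Xmat, h]

theorem Closed.Xmat_entries_eq_sub_one (hJ : Closed J) {A : Matrix (Fin n) (Fin n) F}
    (hA : A ∈ UJ J) :
    Xmat J (fun p => A p.1 p.2) = A - 1 := by
  ext i j
  by_cases h : (i, j) ∈ J
  · have hij : i ≠ j := by rintro rfl; exact hJ.pair_self_notMem i h
    simp [Xmat, h, hij]
  · simp [Xmat, h, entry_eq_zero_of_mem_nJ (sub_one_mem_nJ hA) h]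

def minimalProj (J : Finset (Pr n)) : Matrix (Fin n) (Fin n) F :=
  diagonal fun i => if ∃ h, (h, i) ∈ J then 0 else 1

theorem diagonal_mul_mem_nJ (d : Fin n → F) {A : Matrix (Fin n) (Fin n) F} (hA : A ∈ nJ J) :
    diagonal d * A ∈ nJ J := by
  intro i j h
  simp [diagonal_mul, entry_eq_zero_of_mem_nJ hA h]

theorem one_sub_minimalProj :
    1 - minimalProj J = diagonal fun i => if ∃ h, (h, i) ∈ J then (1 : F) else 0 := by
  rw [minimalProj, ← diagonal_one, diagonal_sub]
  congr 1
  ext i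
  split_ifs <;> simp

theorem mul_minimalProj_eq_zero {X : Matrix (Fin n) (Fin n) F} (hX : X ∈ nJ J) :
    X * minimalProj J = 0 := by
  ext i j
  by_cases h : (i, j) ∈ J
  · simp [minimalProj, mul_diagonal, show ∃ h, (h, j) ∈ J from ⟨i, h⟩]
  · simp [minimalProj, mul_diagonal, entry_eq_zero_of_mem_nJ hX h]

theorem NoFourChain.one_sub_minimalProj_mul_mul_eq_zero (h4 : NoFourChain J)
    {A X : Matrix (Fin n) (Fin n) F} (hA : A ∈ nJ J) (hX : X ∈ nJ J) :
    (1 - minimalProj J) * A * X = 0 := by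
  ext i k
  rw [one_sub_minimalProj, mul_assoc, diagonal_mul]
  split_ifs with hi
  · obtain ⟨h, hhi⟩ := hi
    simp only [one_mul, Matrix.mul_apply, Matrix.zero_apply]
    refine Finset.sum_eq_zero fun j _ => ?_
    by_cases hij : (i, j) ∈ J
    · rw [entry_eq_zero_of_mem_nJ hX fun hjk => h4 ⟨h, i, j, k, hhi, hij, hjk⟩, mul_zero]
    · rw [entry_eq_zero_of_mem_nJ hA hij, zero_mul]
  · simp

theorem exists_conj_eq_one_add_mul_mul (hJ : Closed J) (h4 : NoFourChain J)
    {A B X : Matrix (Fin n) (Fin n) F} (hA : A ∈ nJ J) (hB : B ∈ nJ J) (hX : X ∈ nJ J) :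
    ∃ g h, g ∈ UJ J ∧ h ∈ UJ J ∧ g * h = 1 ∧ 1 + (1 + A) * X * (1 + B) = g * (1 + X) * h := by
  set P : Matrix (Fin n) (Fin n) F := minimalProj J
  set C := P * A - (1 - P) * B with hCdef
  have hC : C ∈ nJ J := sub_mem (diagonal_mul_mem_nJ _ hA)
    (by rw [one_sub_minimalProj]; exact diagonal_mul_mem_nJ _ hB)
  have hCX : C * X = A * X := by
    have e : C * X = A * X - (1 - P) * A * X - (1 - P) * B * X := by rw [hCdef]; noncomm_ring
    rw [e, h4.one_sub_minimalProj_mul_mul_eq_zero hA hX,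
      h4.one_sub_minimalProj_mul_mul_eq_zero hB hX, sub_zero, sub_zero]
  have hXC : X * C = -(X * B) := by
    have e : X * C = X * P * A - X * B + X * P * B := by rw [hCdef]; noncomm_ring
    rw [e, mul_minimalProj_eq_zero hX, zero_mul, zero_mul, zero_sub, add_zero]
  have hCXC : C * X * C = 0 := h4.mul_mul_eq_zero hC hX hC
  refine ⟨1 + C, 1 - C + C * C, hJ.one_add_mem_UJ hC,
    by simpa only [sub_eq_add_neg, add_assoc] using
      hJ.one_add_mem_UJ (add_mem (neg_mem hC) (hJ.mul_mem_nJ hC hC)), ?_, ?_⟩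
  · have e : (1 + C) * (1 - C + C * C) = 1 + C * C * C := by noncomm_ring
    rw [e, h4.mul_mul_eq_zero hC hC hC, add_zero]
  · have e₁ : 1 + (1 + A) * X * (1 + B) = 1 + X + A * X + X * B + A * X * B := by noncomm_ring
    have e₂ : (1 + C) * (1 + X) * (1 - C + C * C) =
        1 + X + C * X - X * C + (C * C * C + X * C * C - C * X * C + C * X * C * C) := by
      noncomm_ring
    rw [e₁, e₂, h4.mul_mul_eq_zero hA hX hB, h4.mul_mul_eq_zero hC hC hC,
      h4.mul_mul_eq_zero hX hC hC, hCXC, zero_mul, hCX, hXC]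
    abel

theorem image_biOrbit_eq_conjugates (hJ : Closed J) (h4 : NoFourChain J) (φ : Pr n → F) :
    (fun Y => 1 + Y) '' biOrbit J φ =
      {M | ∃ g h, g ∈ UJ J ∧ h ∈ UJ J ∧ g * h = 1 ∧ M = g * xmat J φ * h} := by
  ext M
  constructor
  · rintro ⟨_, ⟨u, v, hu, hv, rfl⟩, rfl⟩
    obtain ⟨g, h, hg, hh, hgh, he⟩ := exists_conj_eq_one_add_mul_mul hJ h4
      (sub_one_mem_nJ hu) (sub_one_mem_nJ hv) (Xmat_mem_nJ φ)
    exact ⟨g, h, hg, hh, hgh, by simpa [xmat] using he⟩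
  · rintro ⟨g, h, hg, hh, hgh, rfl⟩
    refine ⟨g * Xmat J φ * h, ⟨g, h, hg, hh, rfl⟩, ?_⟩
    rw [xmat, mul_add, add_mul, mul_one, hgh]

def coords (J : Finset (Pr n)) : Matrix (Fin n) (Fin n) F →ₗ[F] J → F where
  toFun A p := A p.1.1 p.1.2
  map_add' _ _ := rfl
  map_smul' _ _ := rfl

@[simp]
theorem coords_apply (A : Matrix (Fin n) (Fin n) F) (p : J) : coords J A p = A p.1.1 p.1.2 :=
  rfl

def ofCoords (J : Finset (Pr n)) (a : J → F) : Matrix (Fin n) (Fin n) F :=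
  Matrix.of fun i j => if h : (i, j) ∈ J then a ⟨(i, j), h⟩ else 0

theorem ofCoords_mem_nJ (a : J → F) : ofCoords J a ∈ nJ J := by
  intro i j h
  simp [ofCoords, h]

@[simp]
theorem coords_ofCoords (a : J → F) : coords J (ofCoords J a) = a := by
  ext p
  simp [ofCoords]

def lamLinear (J : Finset (Pr n)) (η : Pr n → F) : Matrix (Fin n) (Fin n) F →ₗ[F] F where
  toFun := lam J η
  map_add' X Y := by simp [lam, mul_add, Finset.sum_add_distrib]
  map_smul' c X := by simp [lam, Finset.mul_sum, mul_left_comm]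

@[simp]
theorem lamLinear_apply (η : Pr n → F) (X : Matrix (Fin n) (Fin n) F) :
    lamLinear J η X = lam J η X :=
  rfl

theorem sum_mul_entry_of_mem_nJ {X : Matrix (Fin n) (Fin n) F} (hX : X ∈ nJ J)
    (f : Pr n → F) : ∑ p ∈ J, f p * X p.1 p.2 = ∑ i, ∑ j, f (i, j) * X i j := by
  rw [← Fintype.sum_prod_type' (f := fun i j => f (i, j) * X i j)]
  refine Finset.sum_subset (Finset.subset_univ J) fun p _ hp => ?_
  rw [entry_eq_zero_of_mem_nJ hX hp, mul_zero]

theorem metaL_apply (η : Pr n → F) (p q : J) :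
    MetaL J η p q = if q.1.2 = p.1.1 then η (q.1.1, p.1.2) else 0 := by
  simp only [MetaL, of_apply]
  by_cases h : q.1.2 = p.1.1
  · rw [if_pos ⟨h, h ▸ q.2, p.2⟩, if_pos h]
  · rw [if_neg fun h' => h h'.1, if_neg h]

theorem metaL_mulVec_coords (η : Pr n → F) {X : Matrix (Fin n) (Fin n) F} (hX : X ∈ nJ J)
    (p : J) : (MetaL J η *ᵥ coords J X) p = ∑ i, η (i, p.1.2) * X i p.1.1 := by
  simp only [mulVec, dotProduct, metaL_apply, coords_apply]
  rw [Finset.sum_coe_sort J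
    (fun q => (if q.2 = p.1.1 then η (q.1, p.1.2) else 0) * X q.1 q.2),
    sum_mul_entry_of_mem_nJ hX]
  simp

theorem Closed.lam_mul (hJ : Closed J) (η : Pr n → F) {X Y : Matrix (Fin n) (Fin n) F}
    (hX : X ∈ nJ J) (hY : Y ∈ nJ J) :
    lam J η (X * Y) = coords J Y ⬝ᵥ MetaL J η *ᵥ coords J X := by
  calc lam J η (X * Y) = ∑ i, ∑ k, η (i, k) * ∑ j, X i j * Y j k :=
        sum_mul_entry_of_mem_nJ (hJ.mul_mem_nJ hX hY) η
    _ = ∑ j, ∑ k, (∑ i, η (i, k) * X i j) * Y j k := by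
        simp only [Finset.mul_sum, Finset.sum_mul]
        rw [Finset.sum_congr rfl fun i _ => Finset.sum_comm, Finset.sum_comm]
        refine Finset.sum_congr rfl fun j _ => ?_
        rw [Finset.sum_comm]
        exact Finset.sum_congr rfl fun k _ => Finset.sum_congr rfl fun i _ => by ring
    _ = ∑ p ∈ J, (∑ i, η (i, p.2) * X i p.1) * Y p.1 p.2 :=
        (sum_mul_entry_of_mem_nJ hY fun p => ∑ i, η (i, p.2) * X i p.1).symm
    _ = coords J Y ⬝ᵥ MetaL J η *ᵥ coords J X := by
        rw [← Finset.sum_coe_sort J]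
        simp [dotProduct, metaL_mulVec_coords η hX, mul_comm]

theorem lam_zero (η : Pr n → F) : lam J η 0 = 0 :=
  (lamLinear J η).map_zero

theorem NoFourChain.metaL_mulVec_coords_mul (hJ : Closed J) (h4 : NoFourChain J)
    (η : Pr n → F) {X Y : Matrix (Fin n) (Fin n) F} (hX : X ∈ nJ J) (hY : Y ∈ nJ J) :
    MetaL J η *ᵥ coords J (X * Y) = 0 := by
  refine dotProduct_eq_zero _ fun a => ?_
  rw [dotProduct_comm, ← coords_ofCoords a, ← hJ.lam_mul η (hJ.mul_mem_nJ hX hY)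
    (ofCoords_mem_nJ a), h4.mul_mul_eq_zero hX hY (ofCoords_mem_nJ a), lam_zero]

theorem NoFourChain.coords_mul_vecMul_metaL (hJ : Closed J) (h4 : NoFourChain J)
    (η : Pr n → F) {X Y : Matrix (Fin n) (Fin n) F} (hX : X ∈ nJ J) (hY : Y ∈ nJ J) :
    coords J (X * Y) ᵥ* MetaL J η = 0 := by
  refine dotProduct_eq_zero _ fun a => ?_
  rw [← dotProduct_mulVec, ← coords_ofCoords a, ← hJ.lam_mul η (ofCoords_mem_nJ a)
    (hJ.mul_mem_nJ hX hY), ← mul_assoc, h4.mul_mul_eq_zero (ofCoords_mem_nJ a) hX hY, lam_zero]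

def twoSidedSpace (J : Finset (Pr n)) (X : Matrix (Fin n) (Fin n) F) :
    Submodule F (Matrix (Fin n) (Fin n) F) :=
  LinearMap.range ((LinearMap.mulRight F X ∘ₗ (nJ J).subtype ∘ₗ LinearMap.fst F (nJ J) (nJ J)) +
    (LinearMap.mulLeft F X ∘ₗ (nJ J).subtype ∘ₗ LinearMap.snd F (nJ J) (nJ J)))

theorem mem_twoSidedSpace {X Y : Matrix (Fin n) (Fin n) F} :
    Y ∈ twoSidedSpace J X ↔ ∃ A ∈ nJ J, ∃ B ∈ nJ J, A * X + X * B = Y := by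
  simp [twoSidedSpace]

theorem biOrbit_eq_image (hJ : Closed J) (h4 : NoFourChain J) (φ : Pr n → F) :
    biOrbit J φ = (Xmat J φ + ·) '' twoSidedSpace J (Xmat J φ) := by
  have hX := Xmat_mem_nJ (J := J) φ
  ext Y
  constructor
  · rintro ⟨u, v, hu, hv, rfl⟩
    refine ⟨_, mem_twoSidedSpace.2 ⟨_, sub_one_mem_nJ hu, _, sub_one_mem_nJ hv, rfl⟩, ?_⟩
    have e : u * Xmat J φ * v = Xmat J φ + ((u - 1) * Xmat J φ + Xmat J φ * (v - 1)) +
        (u - 1) * Xmat J φ * (v - 1) := by noncomm_ring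
    rw [e, h4.mul_mul_eq_zero (sub_one_mem_nJ hu) hX (sub_one_mem_nJ hv), add_zero]
  · rintro ⟨_, hY, rfl⟩
    obtain ⟨A, hA, B, hB, rfl⟩ := mem_twoSidedSpace.1 hY
    refine ⟨1 + A, 1 + B, hJ.one_add_mem_UJ hA, hJ.one_add_mem_UJ hB, ?_⟩
    have e : (1 + A) * Xmat J φ * (1 + B) = Xmat J φ + (A * Xmat J φ + Xmat J φ * B) +
        A * Xmat J φ * B := by noncomm_ring
    rw [e, h4.mul_mul_eq_zero hA hX hB, add_zero]

theorem Closed.lam_eq_zero_on_twoSidedSpace_iff (hJ : Closed J) (η : Pr n → F)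
    {X : Matrix (Fin n) (Fin n) F} (hX : X ∈ nJ J) :
    (∀ Y ∈ twoSidedSpace J X, lam J η Y = 0) ↔
      MetaL J η *ᵥ coords J X = 0 ∧ coords J X ᵥ* MetaL J η = 0 := by
  have key : ∀ A ∈ nJ J, ∀ B ∈ nJ J, lam J η (A * X + X * B) =
      (coords J X ᵥ* MetaL J η) ⬝ᵥ coords J A + coords J B ⬝ᵥ MetaL J η *ᵥ coords J X :=
    fun A hA B hB => by
      rw [← lamLinear_apply, map_add, lamLinear_apply, lamLinear_apply, hJ.lam_mul η hA hX,
        hJ.lam_mul η hX hB, dotProduct_mulVec]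
  simp only [mem_twoSidedSpace, forall_exists_index, and_imp]
  constructor
  · intro h
    constructor
    · refine dotProduct_eq_zero _ fun b => ?_
      have := h _ 0 (zero_mem _) (ofCoords J b) (ofCoords_mem_nJ b) rfl
      rwa [key _ (zero_mem _) _ (ofCoords_mem_nJ b), map_zero, dotProduct_zero, zero_add,
        coords_ofCoords, dotProduct_comm] at this
    · refine dotProduct_eq_zero _ fun a => ?_
      have := h _ (ofCoords J a) (ofCoords_mem_nJ a) 0 (zero_mem _) rfl
      rwa [key _ (ofCoords_mem_nJ a) _ (zero_mem _), map_zero, zero_dotProduct, add_zero,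
        coords_ofCoords] at this
  · rintro ⟨h₁, h₂⟩ _ A hA B hB rfl
    rw [key A hA B hB, h₁, h₂, zero_dotProduct, dotProduct_zero, add_zero]

open scoped Classical in
theorem superchar_eq_ite (hJ : Closed J) (h4 : NoFourChain J) [Fintype F] {θ : AddChar F ℂ}
    (hθ : θ ≠ 1) (η φ : Pr n → F) :
    superchar J θ η φ =
      if MetaL J η *ᵥ coords J (Xmat J φ) = 0 ∧ coords J (Xmat J φ) ᵥ* MetaL J η = 0 then
        (Fintype.card F : ℂ) ^ corank J η * θ⁻¹ (lam J η (Xmat J φ))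
      else 0 := by
  set X := Xmat J φ
  set T := twoSidedSpace J X
  let : Fintype T := Fintype.ofFinite T
  have hsum : ∑ᶠ Y ∈ biOrbit J φ, starRingEnd ℂ (θ (lam J η Y)) =
      θ⁻¹ (lam J η X) * ∑ w : T, θ⁻¹ (lamLinear J η w) := by
    rw [biOrbit_eq_image hJ h4, finsum_mem_image (add_right_injective X).injOn,
      ← finsum_set_coe_eq_finsum_mem, finsum_eq_sum_of_fintype, Finset.mul_sum]
    refine Finset.sum_congr rfl fun w _ => ?_
    rw [← AddChar.map_neg_eq_conj, ← AddChar.inv_apply, ← lamLinear_apply, map_add,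
      AddChar.map_add_eq_mul]
    rfl
  have hcard : Nat.card (biOrbit J φ) = Fintype.card T := by
    rw [biOrbit_eq_image hJ h4, Nat.card_image_of_injective (add_right_injective X),
      Nat.card_eq_fintype_card]
    rfl
  rw [superchar, hsum, hcard, AddChar.sum_comp_linearMap_submodule (inv_ne_one.2 hθ) _ T
    (hJ.lam_eq_zero_on_twoSidedSpace_iff η (Xmat_mem_nJ φ)).symm]
  split_ifs
  · field_simp
  · simp

def repSpace (J : Finset (Pr n)) (η : Pr n → F) : Submodule F (J → F) :=
  LinearMap.range (MetaL J η).mulVecLin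

def shift (J : Finset (Pr n)) (η : Pr n → F) :
    Matrix (Fin n) (Fin n) F →ₗ[F] repSpace J η :=
  (MetaL J η).mulVecLin.rangeRestrict ∘ₗ coords J

@[simp]
theorem coe_shift (η : Pr n → F) (X : Matrix (Fin n) (Fin n) F) :
    (shift J η X : J → F) = MetaL J η *ᵥ coords J X :=
  rfl

theorem vecMul_metaL_eq_zero_iff (η : Pr n → F) (c : J → F) :
    c ᵥ* MetaL J η = 0 ↔ ∀ u ∈ repSpace J η, c ⬝ᵥ u = 0 := by
  constructor
  · rintro h _ ⟨x, rfl⟩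
    rw [mulVecLin_apply, dotProduct_mulVec, h, zero_dotProduct]
  · exact fun h => dotProduct_eq_zero _ fun x => by rw [← dotProduct_mulVec]; exact h _ ⟨x, rfl⟩

theorem NoFourChain.exists_shift_eq_zero_dotProduct_ne_zero (h4 : NoFourChain J)
    (η : Pr n → F) {y : J → F} (hy : y ∈ repSpace J η) (hy0 : y ≠ 0) :
    ∃ X ∈ nJ J, shift J η X = 0 ∧ coords J X ⬝ᵥ y ≠ 0 := by
  classical
  obtain ⟨x, rfl⟩ := hy
  obtain ⟨p, hp⟩ := Function.ne_iff.1 hy0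
  obtain ⟨q, -, hq⟩ := Finset.exists_ne_zero_of_sum_ne_zero hp
  have hqp : q.1.2 = p.1.1 := by
    by_contra h
    simp [metaL_apply, h] at hq
  -- the arc `p` starts at a non-minimal element, so no arc leaves its end
  refine ⟨ofCoords J (Pi.single p 1), ofCoords_mem_nJ _, Subtype.ext ?_, ?_⟩
  · ext r
    rw [coe_shift, coords_ofCoords, mulVec_single_one, col_apply, metaL_apply,
      Submodule.coe_zero, Pi.zero_apply, if_neg fun (hpr : p.1.2 = r.1.1) =>
        h4 ⟨q.1.1, p.1.1, p.1.2, r.1.2, hqp ▸ q.2, p.2, hpr ▸ r.2⟩]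
  · rwa [coords_ofCoords, single_dotProduct, one_mul]

theorem NoFourChain.exists_shift_eq_zero_addChar_ne (h4 : NoFourChain J) (η : Pr n → F)
    {ψ : AddChar F ℂ} (hψ : ψ ≠ 1) {u v : repSpace J η} (huv : u ≠ v) :
    ∃ X ∈ nJ J, shift J η X = 0 ∧
      ψ (lam J η X + coords J X ⬝ᵥ u) ≠ ψ (lam J η X + coords J X ⬝ᵥ v) := by
  obtain ⟨X, hX, hs, hXuv⟩ := h4.exists_shift_eq_zero_dotProduct_ne_zero η (sub_mem u.2 v.2)
    (sub_ne_zero.2 (Subtype.coe_injective.ne huv))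
  obtain ⟨t, ht⟩ := AddChar.ne_one_iff.1 hψ
  set s := t / (coords J X ⬝ᵥ (u - v : J → F))
  refine ⟨s • X, Submodule.smul_mem _ _ hX, by rw [map_smul, hs, smul_zero], fun heq => ht ?_⟩
  have e : lam J η (s • X) + coords J (s • X) ⬝ᵥ u =
      lam J η (s • X) + coords J (s • X) ⬝ᵥ v + t := by
    have hd : coords J X ⬝ᵥ (u : J → F) =
        coords J X ⬝ᵥ (v : J → F) + coords J X ⬝ᵥ (u - v : J → F) := by
      rw [dotProduct_sub]; ring
    rw [map_smul, smul_dotProduct, smul_dotProduct, hd, smul_eq_mul, smul_eq_mul, mul_add,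
      div_mul_cancel₀ t hXuv]
    ring
  rw [e, AddChar.map_add_eq_mul] at heq
  exact (mul_eq_left₀ (AddChar.val_isUnit ψ _).ne_zero).1 heq

section Representation

open scoped Classical

variable (η : Pr n → F) (ψ : AddChar F ℂ)

noncomputable def rep (J : Finset (Pr n)) (η : Pr n → F) (ψ : AddChar F ℂ)
    (X : Matrix (Fin n) (Fin n) F) : Matrix (repSpace J η) (repSpace J η) ℂ :=
  Matrix.of fun u => Pi.single (u + shift J η X) (ψ (lam J η X + coords J X ⬝ᵥ u))

theorem rep_apply (X : Matrix (Fin n) (Fin n) F) (u w : repSpace J η) :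
    rep J η ψ X u w = if w = u + shift J η X then ψ (lam J η X + coords J X ⬝ᵥ u) else 0 := by
  simp [rep, Pi.single_apply]

theorem rep_zero : rep J η ψ 0 = 1 := by
  ext u w
  simp [rep_apply, one_apply, lam_zero, eq_comm]

variable [Fintype F]

noncomputable instance : Fintype (repSpace J η) := Fintype.ofFinite _

theorem card_repSpace : Fintype.card (repSpace J η) = Fintype.card F ^ corank J η :=
  Module.card_eq_pow_finrank

theorem rep_add_add_mul (hJ : Closed J) (h4 : NoFourChain J) {X Y : Matrix (Fin n) (Fin n) F}
    (hX : X ∈ nJ J) (hY : Y ∈ nJ J) :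
    rep J η ψ (X + Y + X * Y) = rep J η ψ X * rep J η ψ Y := by
  have hshift : shift J η (X * Y) = 0 :=
    Subtype.ext (h4.metaL_mulVec_coords_mul hJ η hX hY)
  have horth : ∀ u : repSpace J η, coords J (X * Y) ⬝ᵥ u = 0 :=
    fun u => (vecMul_metaL_eq_zero_iff η _).1 (h4.coords_mul_vecMul_metaL hJ η hX hY) u u.2
  ext u w
  rw [mul_apply, Finset.sum_eq_single (u + shift J η X)
    (fun v _ hv => by rw [rep_apply, if_neg hv, zero_mul]) (by simp)]
  simp only [rep_apply, map_add, hshift, add_zero, ← add_assoc, if_true, mul_ite, mul_zero]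
  split_ifs
  · rw [← AddChar.map_add_eq_mul]
    congr 1
    rw [← lamLinear_apply, map_add, map_add, lamLinear_apply, lamLinear_apply, lamLinear_apply,
      hJ.lam_mul η hX hY, add_dotProduct, add_dotProduct, horth, Submodule.coe_add,
      dotProduct_add, coe_shift]
    ring
  · rfl

theorem trace_rep_eq_ite {ψ : AddChar F ℂ} (hψ : ψ ≠ 1) (X : Matrix (Fin n) (Fin n) F) :
    (rep J η ψ X).trace =
      if MetaL J η *ᵥ coords J X = 0 ∧ coords J X ᵥ* MetaL J η = 0 then
        (Fintype.card F : ℂ) ^ corank J η * ψ (lam J η X)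
      else 0 := by
  have hfix : ∀ u : repSpace J η, u = u + shift J η X ↔ MetaL J η *ᵥ coords J X = 0 := fun u => by
    rw [left_eq_add, ← coe_shift, Submodule.coe_eq_zero]
  simp only [trace, diag, rep_apply, hfix]
  by_cases hM : MetaL J η *ᵥ coords J X = 0
  · simp only [hM, if_true, true_and, AddChar.map_add_eq_mul, ← Finset.mul_sum]
    rw [show ∑ u : repSpace J η, ψ (coords J X ⬝ᵥ u) =
        ∑ u : repSpace J η, ψ (dotProductBilin F F (coords J X) u) from rfl,
      AddChar.sum_comp_linearMap_submodule hψ _ _ (vecMul_metaL_eq_zero_iff η _), card_repSpace]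
    split_ifs <;> push_cast <;> ring
  · simp [hM]

theorem rep_mulVec_of_shift_eq_zero {X : Matrix (Fin n) (Fin n) F} (hX : shift J η X = 0)
    (f : repSpace J η → ℂ) :
    rep J η ψ X *ᵥ f = (fun u : repSpace J η => ψ (lam J η X + coords J X ⬝ᵥ u)) * f := by
  ext u
  simp [mulVec, dotProduct, rep_apply, hX]

theorem rep_mulVec_single (X : Matrix (Fin n) (Fin n) F) (w : repSpace J η) :
    rep J η ψ X *ᵥ Pi.single w 1 =
      ψ (lam J η X + coords J X ⬝ᵥ (w - shift J η X : repSpace J η)) •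
        Pi.single (w - shift J η X) 1 := by
  ext u
  rw [mulVec_single_one, col_apply, rep_apply, Pi.smul_apply, Pi.single_apply, smul_eq_mul,
    mul_ite, mul_one, mul_zero]
  by_cases h : w = u + shift J η X
  · rw [if_pos h, if_pos (eq_sub_of_add_eq h.symm), ← eq_sub_of_add_eq h.symm]
  · rw [if_neg h, if_neg fun h' => h (eq_add_of_sub_eq h'.symm)]

theorem rep_irreducible (h4 : NoFourChain J) (hψ : ψ ≠ 1)
    (W : Submodule ℂ (repSpace J η → ℂ)) (hW : ∀ X ∈ nJ J, ∀ w ∈ W, rep J η ψ X *ᵥ w ∈ W) :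
    W = ⊥ ∨ W = ⊤ := by
  refine W.eq_bot_or_eq_top_of_separating_diagonal
    {d | ∃ X ∈ nJ J, shift J η X = 0 ∧
      d = fun u : repSpace J η => ψ (lam J η X + coords J X ⬝ᵥ u)} ?_ ?_ ?_
  · rintro _ ⟨X, hX, hs, rfl⟩ w hw
    rw [← rep_mulVec_of_shift_eq_zero η ψ hs]
    exact hW X hX w hw
  · intro u v huv
    obtain ⟨X, hX, hs, hne⟩ := h4.exists_shift_eq_zero_addChar_ne η hψ huv
    exact ⟨_, ⟨X, hX, hs, rfl⟩, hne⟩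
  · intro i j hi
    obtain ⟨x, hx⟩ := (i - j).2
    have hs : shift J η (ofCoords J x) = i - j := Subtype.ext (by simpa using hx)
    have := hW _ (ofCoords_mem_nJ x) _ hi
    rwa [rep_mulVec_single, hs, sub_sub_cancel,
      Submodule.smul_mem_iff _ (AddChar.val_isUnit ψ _).ne_zero] at this

end Representation

theorem stmt15_general {F : Type*} [Field F] [Fintype F] {n : ℕ}
    (J : Finset (Pr n)) (hJ : Closed J)
    (θ : AddChar F ℂ) (hθ : θ ≠ 1)
    (h4 : ¬ ∃ i j k l : Fin n, (i, j) ∈ J ∧ (j, k) ∈ J ∧ (k, l) ∈ J) :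
    (∀ φ : Pr n → F,
      (fun Y => 1 + Y) '' biOrbit J φ =
        {M : Matrix (Fin n) (Fin n) F | ∃ g h : Matrix (Fin n) (Fin n) F,
          g ∈ UJ J ∧ h ∈ UJ J ∧ g * h = 1 ∧ M = g * xmat J φ * h}) ∧
    (∀ η : Pr n → F,
      IsIrredCharOn (UJ J) (fun A => superchar J θ η (fun p => A p.1 p.2))) := by
  classical
  refine ⟨image_biOrbit_eq_conjugates hJ h4, fun η => ?_⟩
  have hψ : θ⁻¹ ≠ 1 := inv_ne_one.2 hθ
  refine isIrredCharOn_of_fintype (fun A => rep J η θ⁻¹ (A - 1)) (by simpa using rep_zero η θ⁻¹)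
    (fun A hA B hB => ?_) (fun W hW => rep_irreducible η θ⁻¹ h4 hψ W fun X hX w hw => ?_)
    (fun A hA => ?_)
  · have e : A * B - 1 = (A - 1) + (B - 1) + (A - 1) * (B - 1) := by noncomm_ring
    rw [e, rep_add_add_mul η θ⁻¹ hJ h4 (sub_one_mem_nJ hA) (sub_one_mem_nJ hB)]
  · simpa using hW (1 + X) (hJ.one_add_mem_UJ hX) w hw
  · rw [← hJ.Xmat_entries_eq_sub_one hA, trace_rep_eq_ite η hψ, superchar_eq_ite hJ h4 hθ]

theorem stmt15 {F : Type*} [Field F] [Fintype F] [DecidableEq F] {n : ℕ}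
    (J : Finset (Pr n)) (hJ : Closed J)
    (θ : AddChar F ℂ) (hθ : θ ≠ 1)
    (h4 : ¬ ∃ i j k l : Fin n, (i, j) ∈ J ∧ (j, k) ∈ J ∧ (k, l) ∈ J) :
    (∀ φ : Pr n → F,
      (fun Y => 1 + Y) '' biOrbit J φ =
        {M : Matrix (Fin n) (Fin n) F | ∃ g h : Matrix (Fin n) (Fin n) F,
          g ∈ UJ J ∧ h ∈ UJ J ∧ g * h = 1 ∧ M = g * xmat J φ * h}) ∧
    (∀ η : Pr n → F,
      IsIrredCharOn (UJ J) (fun A => superchar J θ η (fun p => A p.1 p.2))) :=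
  stmt15_general J hJ θ hθ h4

end SCT
end

section
/- Let H = 1 + 𝔫 be an algebra group with dim_{𝔽_q} 𝔫 = d, with fixed basis X_1,…,X_d of 𝔫 and structure constants X_i X_j = Σ_k c_{ij}^k X_k. Let φ, η ∈ 𝔽_q^d. If φ meshes with η, then the complex conjugate of χ^η(x_φ) equals q^{corank(η) − rank(M_φ^η)} · θ(b_0 · b_φ^η) · Π_{i=1}^d θ(φ_i η_i), where b_0 ∈ 𝔽_q^d is any solution of M_φ^η b_0 = −a_φ^η; if φ does not mesh with η, then χ^η(x_φ) = 0. -/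
open Matrix BigOperators

namespace SCT

variable {F : Type*} [Field F] [Fintype F] [DecidableEq F] {n : ℕ}

/-!
Parametrise `H × H` by pairs `z = (ζ₁, ζ₂)` of coordinate vectors and let `orbitCoord c φ z` be
the coordinates of `(1 + X_ζ₁) X_φ (1 + X_ζ₂)`. All fibres of this orbit map have the same size
(translating by a unipotent pair carries one fibre onto another), so averaging over `O_φ` is
averaging over all `q^(2d)` pairs `z`. Now `λ_η` of the orbit point is
`η·φ + ζ₁·a + ζ₂·b + ζ₁·M ζ₂`, which is affine in `ζ₁`: summing `θ` over `ζ₁` leaves `q^d` times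
the sum of `θ(ζ₂·b)` over the solutions of `M ζ₂ = -a`. That sum is `θ(b₀·b) q^(d - rank M)`
when `φ` meshes with `η`, and vanishes otherwise: either there is no solution, or `θ(·b)` is a
nontrivial character of the kernel of `M`.
-/

open Finset

theorem _root_.AddChar.map_sum_eq_prod {A M ι : Type*} [AddCommMonoid A] [CommMonoid M]
    (ψ : AddChar A M) (s : Finset ι) (f : ι → A) : ψ (∑ i ∈ s, f i) = ∏ i ∈ s, ψ (f i) := by
  classical
  induction s using Finset.induction_on with
  | empty => simp
  | insert i s hi ih => rw [sum_insert hi, prod_insert hi, ψ.map_add_eq_mul, ih]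

theorem _root_.Matrix.isNilpotent_of_forall_le_eq_zero {ι R : Type*} [Fintype ι] [DecidableEq ι]
    [LinearOrder ι] [CommRing R] {M : Matrix ι ι R} (hM : ∀ i j, j ≤ i → M i j = 0) :
    IsNilpotent M := by
  refine ⟨Fintype.card ι, ?_⟩
  simpa [charpoly_of_isUpperTriangular M fun i j hji => hM i j hji.le, hM _ _ le_rfl]
    using M.aeval_self_charpoly

theorem _root_.Finset.card_filter_comp_of_bijective {Z : Type*} [Fintype Z] {T : Z → Z}
    (hT : Function.Bijective T) (P : Z → Prop) [DecidablePred P] :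
    #{z | P (T z)} = #{z | P z} :=
  Finset.card_equiv (Equiv.ofBijective T hT) (by simp)

theorem _root_.Fintype.card_mul_sum_image_eq {Z Y R : Type*} [Fintype Z] [DecidableEq Y]
    [CommSemiring R] (g : Z → Y) {K : ℕ} (hK : ∀ z, #{z' | g z' = g z} = K) (f : Y → R) :
    Fintype.card Z * ∑ y ∈ univ.image g, f y = #(univ.image g) * ∑ z, f (g z) := by
  have hfib : ∀ y ∈ univ.image g, #{z | g z = y} = K := by
    simp only [mem_image, mem_univ, true_and]
    rintro _ ⟨z, rfl⟩
    exact hK z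
  have hcard : Fintype.card Z = #(univ.image g) * K := by
    rw [← card_univ, card_eq_sum_card_image g univ, Finset.sum_congr rfl hfib, sum_const,
      smul_eq_mul]
  have hsum : ∑ z, f (g z) = K * ∑ y ∈ univ.image g, f y := by
    rw [sum_comp, mul_sum]
    exact Finset.sum_congr rfl fun y hy => by rw [hfib y hy, nsmul_eq_mul]
  rw [hcard, hsum]
  push_cast
  ring

section

variable {F R ι m : Type*} [Field F] [Fintype F] [CommRing R] [Fintype ι] {ψ : AddChar F R}

theorem _root_.AddChar.sum_dotProduct_eq_ite [IsDomain R] [DecidableEq ι] (hψ : ψ ≠ 1) (w : ι → F)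
    [Decidable (w = 0)] :
    ∑ x : ι → F, ψ (x ⬝ᵥ w) = if w = 0 then (Fintype.card F : R) ^ Fintype.card ι else 0 := by
  classical
  simp_rw [dotProduct, AddChar.map_sum_eq_prod]
  rw [← Fintype.prod_sum (fun i t => ψ (t * w i))]
  simp_rw [AddChar.sum_mulShift _ (AddChar.IsPrimitive.of_ne_one hψ)]
  simp_rw [Nat.cast_ite, Nat.cast_zero]
  rw [prod_ite_zero]
  simp [funext_iff]

variable [DecidableEq F] [DecidableEq ι] [Fintype m]

theorem _root_.Matrix.card_filter_mulVec_eq_zero (M : Matrix m ι F) :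
    #{v | M *ᵥ v = 0} = Fintype.card F ^ (Fintype.card ι - M.rank) := by
  classical
  have hker : #{v | M *ᵥ v = 0} = Fintype.card (LinearMap.ker M.mulVecLin) := by
    rw [← Fintype.card_subtype]
    exact Fintype.card_congr (Equiv.subtypeEquivRight fun v => by simp)
  have hrank := LinearMap.finrank_range_add_finrank_ker M.mulVecLin
  rw [Module.finrank_fintype_fun_eq_card] at hrank
  rw [hker, Module.card_eq_pow_finrank (K := F), ← hrank, Matrix.rank, Nat.add_sub_cancel_left]

theorem _root_.Matrix.sum_addChar_dotProduct_ker_of_orthogonal (M : Matrix m ι F)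
    {b : ι → F} (hb : ∀ v, M *ᵥ v = 0 → b ⬝ᵥ v = 0) :
    ∑ v with M *ᵥ v = 0, ψ (v ⬝ᵥ b) = (Fintype.card F : R) ^ (Fintype.card ι - M.rank) := by
  rw [Finset.sum_congr rfl fun v hv => by
      rw [dotProduct_comm, hb v (mem_filter.1 hv).2, ψ.map_zero_eq_one],
    sum_const, card_filter_mulVec_eq_zero, nsmul_one, Nat.cast_pow]

theorem _root_.Matrix.sum_addChar_dotProduct_ker_eq_zero [IsDomain R] (hψ : ψ ≠ 1)
    (M : Matrix m ι F) {b v₀ : ι → F} (hv₀ : M *ᵥ v₀ = 0) (hb : b ⬝ᵥ v₀ ≠ 0) :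
    ∑ v with M *ᵥ v = 0, ψ (v ⬝ᵥ b) = 0 := by
  -- translating the kernel by `t • v₀` multiplies the sum by `ψ s ≠ 1`
  obtain ⟨s, hs⟩ := AddChar.ne_one_iff.1 hψ
  set t := s / (b ⬝ᵥ v₀)
  have hshift : ψ ((t • v₀) ⬝ᵥ b) = ψ s := by
    rw [smul_dotProduct, dotProduct_comm, smul_eq_mul, div_mul_cancel₀ _ hb]
  refine eq_zero_of_mul_eq_self_left (hshift ▸ hs) ?_
  rw [mul_sum]
  refine Finset.sum_equiv (Equiv.addLeft (t • v₀))
    (fun v => by simp [mulVec_add, mulVec_smul, hv₀]) fun v _ => ?_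
  rw [Equiv.coe_addLeft, add_dotProduct, AddChar.map_add_eq_mul]

theorem _root_.Matrix.sum_addChar_dotProduct_solutions_eq_mul_ker (M : Matrix m ι F) {r : m → F}
    {b₀ : ι → F} (hb₀ : M *ᵥ b₀ = r) (b : ι → F) :
    ∑ ζ with M *ᵥ ζ = r, ψ (ζ ⬝ᵥ b) = ψ (b₀ ⬝ᵥ b) * ∑ v with M *ᵥ v = 0, ψ (v ⬝ᵥ b) := by
  rw [mul_sum]
  symm
  refine Finset.sum_equiv (Equiv.addLeft b₀) (fun v => by simp [mulVec_add, hb₀]) fun v _ => ?_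
  rw [Equiv.coe_addLeft, add_dotProduct, AddChar.map_add_eq_mul]

theorem _root_.Matrix.sum_addChar_dotProduct_solutions_of_orthogonal (M : Matrix m ι F)
    {r : m → F} {b₀ b : ι → F} (hb₀ : M *ᵥ b₀ = r) (hb : ∀ v, M *ᵥ v = 0 → b ⬝ᵥ v = 0) :
    ∑ ζ with M *ᵥ ζ = r, ψ (ζ ⬝ᵥ b) =
      ψ (b₀ ⬝ᵥ b) * (Fintype.card F : R) ^ (Fintype.card ι - M.rank) := by
  rw [M.sum_addChar_dotProduct_solutions_eq_mul_ker hb₀,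
    M.sum_addChar_dotProduct_ker_of_orthogonal hb]

theorem _root_.Matrix.sum_addChar_dotProduct_solutions_eq_zero [IsDomain R] (hψ : ψ ≠ 1)
    (M : Matrix m ι F) {r : m → F} {b : ι → F}
    (h : ¬((∃ b₀, M *ᵥ b₀ = r) ∧ ∀ v, M *ᵥ v = 0 → b ⬝ᵥ v = 0)) :
    ∑ ζ with M *ᵥ ζ = r, ψ (ζ ⬝ᵥ b) = 0 := by
  by_cases hsol : ∃ b₀, M *ᵥ b₀ = r
  · obtain ⟨b₀, hb₀⟩ := hsol
    obtain ⟨v, hv, hbv⟩ : ∃ v, M *ᵥ v = 0 ∧ b ⬝ᵥ v ≠ 0 := by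
      simpa using fun horth => h ⟨⟨b₀, hb₀⟩, horth⟩
    rw [M.sum_addChar_dotProduct_solutions_eq_mul_ker hb₀,
      M.sum_addChar_dotProduct_ker_eq_zero hψ hv hbv, mul_zero]
  · exact Finset.sum_eq_zero fun ζ hζ => absurd ⟨ζ, (mem_filter.1 hζ).2⟩ hsol

end

section Coordinates

variable {F : Type*} [Field F] {n d : ℕ} {Xb : Fin d → Matrix (Fin n) (Fin n) F}
  {c : Fin d → Fin d → Fin d → F}

def coordMul (c : Fin d → Fin d → Fin d → F) (a b : Fin d → F) : Fin d → F :=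
  fun k => ∑ i, ∑ j, a i * b j * c i j k

def coordCirc (c : Fin d → Fin d → Fin d → F) (a b : Fin d → F) : Fin d → F :=
  a + b + coordMul c a b

def orbitCoord (c : Fin d → Fin d → Fin d → F) (φ : Fin d → F)
    (z : (Fin d → F) × (Fin d → F)) : Fin d → F :=
  φ + coordMul c z.1 φ + coordMul c φ z.2 + coordMul c (coordMul c z.1 φ) z.2

theorem bigX_add (a b : Fin d → F) : bigX Xb (a + b) = bigX Xb a + bigX Xb b := by
  simp [bigX, add_smul, Finset.sum_add_distrib]

theorem bigX_coordMul (hc : ∀ i j, Xb i * Xb j = ∑ k, c i j k • Xb k) (a b : Fin d → F) :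
    bigX Xb (coordMul c a b) = bigX Xb a * bigX Xb b := by
  simp only [bigX, coordMul, Finset.sum_mul_sum, smul_mul_smul_comm, hc, Finset.smul_sum,
    smul_smul, Finset.sum_smul]
  rw [Finset.sum_comm]
  exact Finset.sum_congr rfl fun i _ => Finset.sum_comm

theorem one_add_bigX_coordCirc (hc : ∀ i j, Xb i * Xb j = ∑ k, c i j k • Xb k)
    (a b : Fin d → F) :
    1 + bigX Xb (coordCirc c a b) = (1 + bigX Xb a) * (1 + bigX Xb b) := by
  rw [coordCirc, bigX_add, bigX_add, bigX_coordMul hc]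
  noncomm_ring

theorem bigX_orbitCoord (hc : ∀ i j, Xb i * Xb j = ∑ k, c i j k • Xb k) (φ : Fin d → F)
    (z : (Fin d → F) × (Fin d → F)) :
    bigX Xb (orbitCoord c φ z) = (1 + bigX Xb z.1) * bigX Xb φ * (1 + bigX Xb z.2) := by
  simp only [orbitCoord, bigX_add, bigX_coordMul hc]
  noncomm_ring

theorem orbitCoord_zero (φ : Fin d → F) : orbitCoord c φ 0 = φ := by
  ext k
  simp [orbitCoord, coordMul]

theorem bigX_injective (hli : LinearIndependent F Xb) : Function.Injective (bigX Xb) := by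
  simpa [Function.Injective, bigX, Fintype.linearCombination_apply] using
    hli.fintypeLinearCombination_injective

theorem isUnit_one_add_bigX (hupper : ∀ i : Fin d, ∀ a b : Fin n, b ≤ a → Xb i a b = 0)
    (a : Fin d → F) : IsUnit (1 + bigX Xb a) :=
  IsNilpotent.isUnit_one_add <| Matrix.isNilpotent_of_forall_le_eq_zero fun i j hji => by
    simp [bigX, Matrix.sum_apply, hupper _ _ _ hji]

theorem algCoeffBiOrbit_eq_range (hc : ∀ i j, Xb i * Xb j = ∑ k, c i j k • Xb k)
    (hli : LinearIndependent F Xb) (φ : Fin d → F) :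
    algCoeffBiOrbit Xb φ = Set.range (orbitCoord c φ) := by
  ext ρ
  constructor
  · rintro ⟨ζ₁, ζ₂, h⟩
    exact ⟨(ζ₁, ζ₂), bigX_injective hli ((bigX_orbitCoord hc φ (ζ₁, ζ₂)).trans h)⟩
  · rintro ⟨z, rfl⟩
    exact ⟨z.1, z.2, (bigX_orbitCoord hc φ z).symm⟩

theorem orbitCoord_coordCirc_eq_iff (hc : ∀ i j, Xb i * Xb j = ∑ k, c i j k • Xb k)
    (hupper : ∀ i : Fin d, ∀ a b : Fin n, b ≤ a → Xb i a b = 0)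
    (hli : LinearIndependent F Xb) (φ : Fin d → F) (w z : (Fin d → F) × (Fin d → F)) :
    orbitCoord c φ (coordCirc c w.1 z.1, coordCirc c z.2 w.2) = orbitCoord c φ w ↔
      orbitCoord c φ z = φ := by
  rw [← (bigX_injective hli).eq_iff, ← (bigX_injective hli).eq_iff, bigX_orbitCoord hc,
    bigX_orbitCoord hc, bigX_orbitCoord hc, one_add_bigX_coordCirc hc, one_add_bigX_coordCirc hc]
  rw [show ∀ u u' v v' : Matrix (Fin n) (Fin n) F, u * u' * bigX Xb φ * (v' * v) =
      u * (u' * bigX Xb φ * v') * v from fun _ _ _ _ => by noncomm_ring,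
    (isUnit_one_add_bigX hupper w.2).mul_left_inj, (isUnit_one_add_bigX hupper w.1).mul_right_inj]

theorem coordCirc_right_injective (hc : ∀ i j, Xb i * Xb j = ∑ k, c i j k • Xb k)
    (hupper : ∀ i : Fin d, ∀ a b : Fin n, b ≤ a → Xb i a b = 0)
    (hli : LinearIndependent F Xb) (w : Fin d → F) : Function.Injective (coordCirc c w) :=
  fun _ _ h => bigX_injective hli <| add_left_cancel <|
    (isUnit_one_add_bigX hupper w).mul_left_cancel
      (by simpa only [one_add_bigX_coordCirc hc] using congrArg (1 + bigX Xb ·) h)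

theorem coordCirc_left_injective (hc : ∀ i j, Xb i * Xb j = ∑ k, c i j k • Xb k)
    (hupper : ∀ i : Fin d, ∀ a b : Fin n, b ≤ a → Xb i a b = 0)
    (hli : LinearIndependent F Xb) (w : Fin d → F) : Function.Injective (coordCirc c · w) :=
  fun _ _ h => bigX_injective hli <| add_left_cancel <|
    (isUnit_one_add_bigX hupper w).mul_right_cancel
      (by simpa only [one_add_bigX_coordCirc hc] using congrArg (1 + bigX Xb ·) h)

theorem bijective_coordCirc_prodMap [Finite F] (hc : ∀ i j, Xb i * Xb j = ∑ k, c i j k • Xb k)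
    (hupper : ∀ i : Fin d, ∀ a b : Fin n, b ≤ a → Xb i a b = 0)
    (hli : LinearIndependent F Xb) (w : (Fin d → F) × (Fin d → F)) :
    Function.Bijective (Prod.map (coordCirc c w.1) (coordCirc c · w.2)) :=
  Finite.injective_iff_bijective.1 <| Prod.map_injective.2
    ⟨coordCirc_right_injective hc hupper hli w.1, coordCirc_left_injective hc hupper hli w.2⟩

theorem card_fiber_orbitCoord [Fintype F] [DecidableEq F]
    (hc : ∀ i j, Xb i * Xb j = ∑ k, c i j k • Xb k)
    (hupper : ∀ i : Fin d, ∀ a b : Fin n, b ≤ a → Xb i a b = 0)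
    (hli : LinearIndependent F Xb) (φ : Fin d → F) (w : (Fin d → F) × (Fin d → F)) :
    #{z | orbitCoord c φ z = orbitCoord c φ w} = #{z | orbitCoord c φ z = φ} := by
  rw [← Finset.card_filter_comp_of_bijective (bijective_coordCirc_prodMap hc hupper hli w)]
  simp only [Prod.map, orbitCoord_coordCirc_eq_iff hc hupper hli]

theorem dotProduct_coordMul_eq_algAVec (η a b : Fin d → F) :
    η ⬝ᵥ coordMul c a b = a ⬝ᵥ algAVec c b η := by
  simp only [dotProduct, coordMul, algAVec, Cleft, mulVec, of_apply, Finset.mul_sum]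
  rw [Finset.sum_comm]
  refine Finset.sum_congr rfl fun i _ => ?_
  rw [Finset.sum_comm]
  exact Finset.sum_congr rfl fun j _ => Finset.sum_congr rfl fun k _ => by ring

theorem dotProduct_coordMul_eq_algBVec (η a b : Fin d → F) :
    η ⬝ᵥ coordMul c a b = b ⬝ᵥ algBVec c a η := by
  simp only [dotProduct, coordMul, algBVec, Cright, mulVec, of_apply, Finset.mul_sum]
  rw [Finset.sum_comm]
  conv_rhs => rw [Finset.sum_comm]
  refine Finset.sum_congr rfl fun i _ => ?_
  rw [Finset.sum_comm]
  exact Finset.sum_congr rfl fun j _ => Finset.sum_congr rfl fun k _ => by ring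

theorem dotProduct_orbitCoord (φ η : Fin d → F) (z : (Fin d → F) × (Fin d → F)) :
    η ⬝ᵥ orbitCoord c φ z = η ⬝ᵥ φ + z.1 ⬝ᵥ algAVec c φ η + z.2 ⬝ᵥ algBVec c φ η +
      z.1 ⬝ᵥ algMmesh c φ η *ᵥ z.2 := by
  have hM : algBVec c (coordMul c z.1 φ) η = z.1 ᵥ* algMmesh c φ η := by
    ext j
    rw [algBVec, dotProduct_comm, dotProduct_coordMul_eq_algAVec, vecMul, dotProduct]
    simp [dotProduct, algAVec, algMmesh, mulVec_mulVec]
  simp only [orbitCoord, dotProduct_add, dotProduct_coordMul_eq_algAVec _ z.1,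
    dotProduct_coordMul_eq_algBVec _ φ, dotProduct_coordMul_eq_algBVec _ (coordMul c z.1 φ), hM,
    dotProduct_mulVec, dotProduct_comm z.2 (z.1 ᵥ* _)]

end Coordinates

section CharacterSums

variable {F R : Type*} [Field F] [Fintype F] [DecidableEq F] [CommRing R] [IsDomain R]
  {ψ : AddChar F R} {d : ℕ} {c : Fin d → Fin d → Fin d → F}

theorem sum_addChar_dotProduct_orbitCoord (hψ : ψ ≠ 1) (φ η : Fin d → F) :
    ∑ z, ψ (η ⬝ᵥ orbitCoord c φ z) = ψ (η ⬝ᵥ φ) * (Fintype.card F : R) ^ d *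
      ∑ ζ with algMmesh c φ η *ᵥ ζ = -algAVec c φ η, ψ (ζ ⬝ᵥ algBVec c φ η) := by
  have hterm : ∀ z : (Fin d → F) × (Fin d → F), ψ (η ⬝ᵥ orbitCoord c φ z) =
      ψ (η ⬝ᵥ φ) * ψ (z.2 ⬝ᵥ algBVec c φ η) *
        ψ (z.1 ⬝ᵥ (algAVec c φ η + algMmesh c φ η *ᵥ z.2)) := by
    intro z
    rw [dotProduct_orbitCoord, dotProduct_add]
    simp only [AddChar.map_add_eq_mul]
    ring
  have hinner : ∀ ζ : Fin d → F,
      ∑ x : Fin d → F, ψ (x ⬝ᵥ (algAVec c φ η + algMmesh c φ η *ᵥ ζ)) =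
        if algMmesh c φ η *ᵥ ζ = -algAVec c φ η then (Fintype.card F : R) ^ d else 0 := by
    intro ζ
    rw [AddChar.sum_dotProduct_eq_ite hψ, Fintype.card_fin]
    exact if_congr add_eq_zero_iff_eq_neg' rfl rfl
  simp_rw [hterm]
  rw [Fintype.sum_prod_type_right]
  simp_rw [← Finset.mul_sum, hinner, mul_ite, mul_zero]
  rw [← Finset.sum_filter, Finset.mul_sum]
  exact Finset.sum_congr rfl fun ζ _ => by ring

theorem starRingEnd_algCoeffSuperchar {n : ℕ}
    {Xb : Fin d → Matrix (Fin n) (Fin n) F} {c : Fin d → Fin d → Fin d → F}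
    (hc : ∀ i j, Xb i * Xb j = ∑ k, c i j k • Xb k)
    (hupper : ∀ i : Fin d, ∀ a b : Fin n, b ≤ a → Xb i a b = 0)
    (hli : LinearIndependent F Xb) {θ : AddChar F ℂ} (hθ : θ ≠ 1) (φ η : Fin d → F) :
    starRingEnd ℂ (algCoeffSuperchar Xb θ η φ) =
      Nat.card (algCoeffRightOrbit Xb η) / (Fintype.card F : ℂ) ^ d * θ (η ⬝ᵥ φ) *
        ∑ ζ with algMmesh c φ η *ᵥ ζ = -algAVec c φ η, θ (ζ ⬝ᵥ algBVec c φ η) := by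
  classical
  set O := univ.image (orbitCoord c φ)
  have hO : algCoeffBiOrbit Xb φ = O := by
    rw [algCoeffBiOrbit_eq_range hc hli, coe_image, coe_univ, Set.image_univ]
  have hO0 : (#O : ℂ) ≠ 0 := Nat.cast_ne_zero.2 (card_ne_zero_of_mem
    (mem_image.2 ⟨0, mem_univ _, orbitCoord_zero φ⟩))
  have havg := Fintype.card_mul_sum_image_eq (orbitCoord c φ)
    (card_fiber_orbitCoord hc hupper hli φ) fun ρ => θ (η ⬝ᵥ ρ)
  rw [sum_addChar_dotProduct_orbitCoord hθ, Fintype.card_prod, Fintype.card_fun,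
    Fintype.card_fin, Nat.cast_mul, Nat.cast_pow] at havg
  have hq : (Fintype.card F : ℂ) ^ d ≠ 0 :=
    pow_ne_zero _ (Nat.cast_ne_zero.2 Fintype.card_ne_zero)
  have hsum : (Fintype.card F : ℂ) ^ d * ∑ ρ ∈ O, θ (η ⬝ᵥ ρ) = #O * θ (η ⬝ᵥ φ) *
      ∑ ζ with algMmesh c φ η *ᵥ ζ = -algAVec c φ η, θ (ζ ⬝ᵥ algBVec c φ η) :=
    mul_left_cancel₀ hq (by linear_combination havg)
  rw [algCoeffSuperchar, hO, SetLike.coe_sort_coe, Nat.card_eq_finsetCard,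
    finsum_mem_coe_finset, map_mul, map_div₀, map_natCast, map_natCast, map_sum]
  simp_rw [Complex.conj_conj]
  field_simp
  linear_combination (Nat.card (algCoeffRightOrbit Xb η) : ℂ) * hsum

end CharacterSums

theorem stmt17_general {F : Type*} [Field F] [Fintype F] {n d : ℕ}
    (Xb : Fin d → Matrix (Fin n) (Fin n) F)
    (hupper : ∀ i : Fin d, ∀ a b : Fin n, b ≤ a → Xb i a b = 0)
    (hli : LinearIndependent F Xb)
    (c : Fin d → Fin d → Fin d → F)
    (hc : ∀ i j : Fin d, Xb i * Xb j = ∑ k : Fin d, c i j k • Xb k)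
    (θ : AddChar F ℂ) (hθ : θ ≠ 1) (φ η : Fin d → F) :
    (algMeshes c φ η →
      ∀ b0 : Fin d → F, (algMmesh c φ η).mulVec b0 = -algAVec c φ η →
        (starRingEnd ℂ) (algCoeffSuperchar Xb θ η φ) =
          ((Nat.card (algCoeffRightOrbit Xb η) : ℂ) /
              (Fintype.card F : ℂ) ^ (algMmesh c φ η).rank) *
            θ (b0 ⬝ᵥ algBVec c φ η) * ∏ i : Fin d, θ (φ i * η i)) ∧
    (¬ algMeshes c φ η → algCoeffSuperchar Xb θ η φ = 0) := by
  classical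
  have hformula := starRingEnd_algCoeffSuperchar hc hupper hli hθ φ η
  refine ⟨fun ⟨_, horth⟩ b0 hb0 => ?_, fun hmesh => ?_⟩
  · have hprod : ∏ i, θ (φ i * η i) = θ (η ⬝ᵥ φ) := by
      rw [dotProduct_comm, dotProduct, AddChar.map_sum_eq_prod]
    have hq : (Fintype.card F : ℂ) ≠ 0 := Nat.cast_ne_zero.2 Fintype.card_ne_zero
    have hsplit : (Fintype.card F : ℂ) ^ d =
        (Fintype.card F : ℂ) ^ (d - (algMmesh c φ η).rank) *
          (Fintype.card F : ℂ) ^ (algMmesh c φ η).rank := by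
      rw [← pow_add, Nat.sub_add_cancel (algMmesh c φ η).rank_le_width]
    rw [hformula, (algMmesh c φ η).sum_addChar_dotProduct_solutions_of_orthogonal hb0 horth,
      hprod, Fintype.card_fin, hsplit]
    field_simp
  · rw [(algMmesh c φ η).sum_addChar_dotProduct_solutions_eq_zero hθ hmesh, mul_zero]
      at hformula
    exact (map_eq_zero _).1 hformula

theorem stmt17 {F : Type*} [Field F] [Fintype F] [DecidableEq F] {n d : ℕ}
    (Xb : Fin d → Matrix (Fin n) (Fin n) F)
    (hupper : ∀ i : Fin d, ∀ a b : Fin n, b ≤ a → Xb i a b = 0)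
    (hli : LinearIndependent F Xb)
    (c : Fin d → Fin d → Fin d → F)
    (hc : ∀ i j : Fin d, Xb i * Xb j = ∑ k : Fin d, c i j k • Xb k)
    (θ : AddChar F ℂ) (hθ : θ ≠ 1) (φ η : Fin d → F) :
    (algMeshes c φ η →
      ∀ b0 : Fin d → F, (algMmesh c φ η).mulVec b0 = -algAVec c φ η →
        (starRingEnd ℂ) (algCoeffSuperchar Xb θ η φ) =
          ((Nat.card (algCoeffRightOrbit Xb η) : ℂ) /
              (Fintype.card F : ℂ) ^ (algMmesh c φ η).rank) *
            θ (b0 ⬝ᵥ algBVec c φ η) * ∏ i : Fin d, θ (φ i * η i)) ∧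
    (¬ algMeshes c φ η → algCoeffSuperchar Xb θ η φ = 0) :=
  stmt17_general Xb hupper hli c hc θ hθ φ η

end SCT
end
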